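/- The sequence r_k · ρ^(−k) converges as k → ∞ to (ρ − 1)(1 + ρ^(−1/2)). -/
import Mathlib


open Finset

/-- The silver ratio ρ = 1 + √2. -/
noncomputable def rho : ℝ := 1 + Real.sqrt 2

/-- Entry `i` of the silver stepsize schedule π^(k) ∈ ℝ^(2^k − 1) (0-indexed):
π^(1) = [√2], π^(k+1) = [π^(k), β_k, π^(k)] where β_k = 1 + ρ^(k−1). -/
noncomputable def piSilver : ℕ → ℕ → ℝ
  | 0, _ => 0
  | 1, _ => Real.sqrt 2
  | k + 2, i =>
      if i < 2 ^ (k + 1) - 1 then piSilver (k + 1) i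
      else if i = 2 ^ (k + 1) - 1 then 1 + rho ^ k
      else piSilver (k + 1) (i - 2 ^ (k + 1))

/-- The sequence r_k: r_1 = 4, r_{k+1} = (r_k + 4ρ^k + √(r_k(r_k + 8ρ^k)))/2. -/
noncomputable def rseq : ℕ → ℝ
  | 0 => 0
  | 1 => 4
  | k + 2 =>
      (rseq (k + 1) + 4 * rho ^ (k + 1)
        + Real.sqrt (rseq (k + 1) * (rseq (k + 1) + 8 * rho ^ (k + 1)))) / 2

/-- α_k = 1 + (√(r_k(r_k + 8ρ^k)) − r_k)/4. -/
noncomputable def alphaSeq (k : ℕ) : ℝ :=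
  1 + (Real.sqrt (rseq k * (rseq k + 8 * rho ^ k)) - rseq k) / 4

/-- Entry `i` of h_right^(k) ∈ ℝ^(2^k − 1) (0-indexed):
h_right^(1) = [3/2], h_right^(k+1) = [π^(k), α_k, h_right^(k)]. -/
noncomputable def hright : ℕ → ℕ → ℝ
  | 0, _ => 0
  | 1, _ => 3 / 2
  | k + 2, i =>
      if i < 2 ^ (k + 1) - 1 then piSilver (k + 1) i
      else if i = 2 ^ (k + 1) - 1 then alphaSeq (k + 1)
      else hright (k + 1) (i - 2 ^ (k + 1))

/-- h_left^(k) is h_right^(k) with its entries reversed. -/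
noncomputable def hleft (k i : ℕ) : ℝ := hright k (2 ^ k - 2 - i)

section aux


lemma sqrt2_sq : Real.sqrt 2 ^ 2 = 2 := Real.sq_sqrt (by norm_num)
lemma sqrt2_gt : (1.414 : ℝ) < Real.sqrt 2 := by
  nlinarith [sqrt2_sq, Real.sqrt_nonneg 2]
lemma sqrt2_lt : Real.sqrt 2 < 1.415 := by
  nlinarith [sqrt2_sq, Real.sqrt_nonneg 2]
lemma rho_gt : (2.414 : ℝ) < rho := by unfold rho; linarith [sqrt2_gt]
lemma rho_lt : rho < 2.415 := by unfold rho; linarith [sqrt2_lt]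
lemma rho_pos : (0:ℝ) < rho := by linarith [rho_gt]

noncomputable def qs : ℝ := Real.sqrt rho

lemma qs_sq : qs ^ 2 = rho := Real.sq_sqrt rho_pos.le
lemma qs_nonneg : (0:ℝ) ≤ qs := Real.sqrt_nonneg rho
lemma qs_gt : (1.55 : ℝ) < qs := by
  nlinarith [qs_sq, rho_gt, qs_nonneg, sq_nonneg (qs - 1.55)]
lemma qs_lt : qs < 1.56 := by
  nlinarith [qs_sq, rho_lt, qs_nonneg, sq_nonneg (qs - 1.56)]
lemma qs_pos : (0:ℝ) < qs := lt_trans (by norm_num) qs_gt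

lemma rpow_eq : rho ^ (-(1 : ℝ) / 2) = 1 / qs := by
  rw [show (-(1:ℝ)/2) = -(1/2) by ring, Real.rpow_neg rho_pos.le,
    ← Real.sqrt_eq_rpow, one_div, qs]

noncomputable def Lc : ℝ := (rho - 1) * (1 + rho ^ (-(1 : ℝ) / 2))

lemma Lc_eq : Lc = Real.sqrt 2 * (1 + 1 / qs) := by
  rw [Lc, rpow_eq]; unfold rho; ring

lemma inv_qs_gt : 1/(1.56:ℝ) < 1/qs := by
  apply one_div_lt_one_div_of_lt qs_pos qs_lt
lemma inv_qs_lt : 1/qs < 1/(1.55:ℝ) := by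
  apply one_div_lt_one_div_of_lt (by norm_num) qs_gt

lemma Lc_gt : (2.3 : ℝ) < Lc := by
  rw [Lc_eq]; nlinarith [sqrt2_gt, inv_qs_gt, sqrt2_lt, inv_qs_lt]
lemma Lc_lt : Lc < 2.33 := by
  rw [Lc_eq]; nlinarith [sqrt2_gt, inv_qs_gt, sqrt2_lt, inv_qs_lt]

/-- fixed point identity for the square root. -/
lemma sqrtL : Real.sqrt (Lc * (Lc + 8)) = (2 * rho - 1) * Lc - 4 := by
  have hw : Real.sqrt 2 ^ 2 = 2 := sqrt2_sq
  have hrho : rho = 1 + Real.sqrt 2 := rfl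
  have hqs : qs ^ 2 = rho := qs_sq
  have hLq : Lc * qs = Real.sqrt 2 * (qs + 1) := by
    rw [Lc_eq]; field_simp [qs_pos.ne']
  have hsq : Lc * (Lc + 8) = ((2 * rho - 1) * Lc - 4) ^ 2 := by
    have h : (Lc * (Lc + 8)) * qs ^ 2 = (((2 * rho - 1) * Lc - 4) ^ 2) * qs ^ 2 := by
      set w := Real.sqrt 2 with hwdef
      linear_combination
        ((-16:ℝ) + 16*w + 16*w^2 - 4*w^3 - 4*w^4 + 16*Lc*qs^2 - 4*Lc^2*qs^2*rho - 4*Lc^2*qs^2*w) * hrho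
        + ((-4:ℝ)*w^2 - 4*w^3 + 16*qs + 16*qs*w - 4*qs*w^2 - 4*qs*w^3 - 4*Lc*qs*w - 4*Lc*qs*w^2) * hLq
        + ((-16:ℝ) + 16*w + 16*w^2 - 4*w^3 - 4*w^4) * hqs
        + ((8:ℝ) - 12*w^2 - 4*w^3 - 8*qs*w - 8*qs*w^2) * hw
    exact mul_right_cancel₀ (ne_of_gt (pow_pos qs_pos 2)) h
  rw [hsq, Real.sqrt_sq (by nlinarith [Lc_gt, rho_gt])]

lemma fixL : 2 * rho * Lc = Lc + 4 + Real.sqrt (Lc * (Lc + 8)) := by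
  rw [sqrtL]; ring

/-- The renormalized sequence. -/
noncomputable def sseq (k : ℕ) : ℝ := rseq k * rho ^ (-(k : ℤ))

lemma sseq_rec (k : ℕ) :
    sseq (k+2) = (sseq (k+1) + 4 + Real.sqrt (sseq (k+1) * (sseq (k+1) + 8))) / (2*rho) := by
  have hR : (0:ℝ) < rho ^ (k+1) := pow_pos rho_pos _
  have hrs : rseq (k+1) = sseq (k+1) * rho ^ (k+1) := by
    unfold sseq
    rw [zpow_neg, zpow_natCast]
    field_simp
  have hsqrt : Real.sqrt (rseq (k+1) * (rseq (k+1) + 8 * rho ^ (k+1)))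
      = rho ^ (k+1) * Real.sqrt (sseq (k+1) * (sseq (k+1) + 8)) := by
    rw [hrs, show sseq (k+1) * rho ^ (k+1) * (sseq (k+1) * rho^(k+1) + 8 * rho^(k+1))
        = (rho^(k+1))^2 * (sseq (k+1) * (sseq (k+1) + 8)) by ring]
    rw [Real.sqrt_mul (sq_nonneg _), Real.sqrt_sq hR.le]
  have hpow : rho ^ (k+1) * rho ^ (-((k+2:ℕ):ℤ)) = rho⁻¹ := by
    rw [zpow_neg, zpow_natCast, show rho ^ (k+2) = rho ^ (k+1) * rho from by ring,
      mul_inv, ← mul_assoc, mul_inv_cancel₀ (pow_ne_zero _ rho_pos.ne'), one_mul]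
  have hdef : sseq (k+2) = ((rseq (k+1) + 4 * rho ^ (k+1)
        + Real.sqrt (rseq (k+1) * (rseq (k+1) + 8 * rho ^ (k+1)))) / 2) * rho ^ (-((k+2:ℕ):ℤ)) := by
    rfl
  rw [hdef, hsqrt, hrs]
  have : (sseq (k+1) * rho^(k+1) + 4*rho^(k+1) + rho^(k+1) * Real.sqrt (sseq (k+1) * (sseq (k+1) + 8))) / 2
        * rho ^ (-((k+2:ℕ):ℤ))
      = (rho^(k+1) * rho ^ (-((k+2:ℕ):ℤ))) * ((sseq (k+1) + 4 + Real.sqrt (sseq (k+1) * (sseq (k+1) + 8))) / 2) := by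
    ring
  rw [this, hpow]
  field_simp

lemma sseq_two : sseq 2 = 2 := by
  have h1 : Real.sqrt (rseq 1 * (rseq 1 + 8 * rho ^ 1)) = 4 * rho := by
    rw [show rseq 1 = 4 from rfl,
      show (4:ℝ) * (4 + 8 * rho ^ 1) = (4 * rho)^2 from by
        unfold rho; linear_combination (-16:ℝ) * sqrt2_sq]
    exact Real.sqrt_sq (by linarith [rho_pos])
  have h2 : rseq 2 = 2 + 4 * rho := by
    show (rseq 1 + 4 * rho ^ 1 + Real.sqrt (rseq 1 * (rseq 1 + 8 * rho ^ 1))) / 2 = 2 + 4 * rho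
    rw [h1, show rseq 1 = 4 from rfl]; ring
  have hrho2 : rho ^ 2 = 1 + 2 * rho := by
    unfold rho; linear_combination sqrt2_sq
  unfold sseq
  rw [h2, zpow_neg, zpow_natCast, hrho2]
  have h0 : (1:ℝ) + 2*rho ≠ 0 := by nlinarith [rho_pos]
  field_simp
  ring

/-- Core contraction/invariance lemma. -/
lemma key (s : ℝ) (h2 : 2 ≤ s) (hL : s ≤ Lc) :
    2 ≤ (s + 4 + Real.sqrt (s * (s + 8))) / (2 * rho) ∧
    (s + 4 + Real.sqrt (s * (s + 8))) / (2 * rho) ≤ Lc ∧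
    Lc - (s + 4 + Real.sqrt (s * (s + 8))) / (2 * rho) ≤ 0.6 * (Lc - s) := by
  set Ds := Real.sqrt (s * (s + 8)) with hDs
  set DL := Real.sqrt (Lc * (Lc + 8)) with hDL
  have hs0 : (0:ℝ) ≤ s * (s + 8) := by nlinarith
  have hDs_sq : Ds ^ 2 = s * (s + 8) := Real.sq_sqrt hs0
  have hDL_sq : DL ^ 2 = Lc * (Lc + 8) := Real.sq_sqrt (by nlinarith [Lc_gt])
  have hDs_nonneg : 0 ≤ Ds := Real.sqrt_nonneg _
  have hDL_nonneg : 0 ≤ DL := Real.sqrt_nonneg _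
  have hDs_ge : (4.4:ℝ) ≤ Ds := by
    nlinarith [hDs_sq, hDs_nonneg, sq_nonneg (Ds - 4.4)]
  have hDsDL : Ds ≤ DL := by
    apply Real.sqrt_le_sqrt; nlinarith
  have hdiff : DL - Ds ≤ 1.46 * (Lc - s) := by
    have hprod : (DL - Ds) * (DL + Ds) = (Lc - s) * (Lc + s + 8) := by
      nlinarith [hDs_sq, hDL_sq]
    nlinarith [hprod, hDs_ge, hDsDL, Lc_lt, hL, h2,
      mul_le_mul_of_nonneg_left (by linarith : (8.8:ℝ) ≤ DL + Ds) (by linarith : (0:ℝ) ≤ DL - Ds)]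
  have h2rho : (0:ℝ) < 2 * rho := by linarith [rho_pos]
  refine ⟨?_, ?_, ?_⟩
  · rw [le_div_iff₀ h2rho]
    nlinarith [rho_lt, hDs_ge]
  · rw [div_le_iff₀ h2rho]
    nlinarith [fixL, hDsDL, hL]
  · rw [sub_le_iff_le_add, ← sub_le_iff_le_add', le_div_iff₀ h2rho]
    nlinarith [fixL, hdiff, rho_gt, hL, mul_le_mul_of_nonneg_left rho_gt.le (by linarith : (0:ℝ) ≤ Lc - s)]

lemma sseq_bounds (n : ℕ) :
    2 ≤ sseq (n+2) ∧ sseq (n+2) ≤ Lc ∧ Lc - sseq (n+2) ≤ 0.6 ^ n * (Lc - 2) := by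
  induction n with
  | zero => rw [sseq_two]; refine ⟨le_refl _, by linarith [Lc_gt], by norm_num⟩
  | succ m ih =>
    obtain ⟨ih1, ih2, ih3⟩ := ih
    have hrec := sseq_rec (m+1)
    have hk := key (sseq (m+2)) ih1 ih2
    rw [← hrec] at hk
    obtain ⟨hk1, hk2, hk3⟩ := hk
    refine ⟨hk1, hk2, ?_⟩
    calc Lc - sseq (m+1+2) ≤ 0.6 * (Lc - sseq (m+2)) := hk3
    _ ≤ 0.6 * (0.6 ^ m * (Lc - 2)) := by linarith
    _ = 0.6 ^ (m+1) * (Lc - 2) := by ring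

lemma sseq_tendsto : Filter.Tendsto sseq Filter.atTop (nhds Lc) := by
  rw [← Filter.tendsto_add_atTop_iff_nat 2]
  have hpow : Filter.Tendsto (fun n : ℕ => (0.6:ℝ) ^ n * (Lc - 2)) Filter.atTop (nhds 0) := by
    have h := tendsto_pow_atTop_nhds_zero_of_lt_one (by norm_num : (0:ℝ) ≤ 0.6) (by norm_num : (0.6:ℝ) < 1)
    simpa using h.mul_const (Lc - 2)
  have hlow : Filter.Tendsto (fun n : ℕ => Lc - 0.6 ^ n * (Lc - 2)) Filter.atTop (nhds Lc) := by
    simpa using (tendsto_const_nhds (x := Lc) (f := Filter.atTop (α := ℕ))).sub hpow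
  apply tendsto_of_tendsto_of_tendsto_of_le_of_le hlow tendsto_const_nhds
  · intro n
    have := (sseq_bounds n).2.2
    simp only []
    linarith
  · intro n
    exact (sseq_bounds n).2.1

/-- **Lemma.** `r_k ρ^(−k) → (ρ − 1)(1 + ρ^(−1/2))` as `k → ∞`. -/
theorem rseq_asymptotic :
    Filter.Tendsto (fun k : ℕ => rseq k * rho ^ (-(k : ℤ))) Filter.atTop
      (nhds ((rho - 1) * (1 + rho ^ (-(1 : ℝ) / 2)))) := by
  exact sseq_tendsto

end aux
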